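/- arXiv:2301.11153 — 2 statements merged into one kernel-verified Lean document; each statement's English description precedes it below -/
import Mathlib

section
/- Let n ≥ 1 be a natural number and T a natural number with T ≥ n. If α_l ≥ 1/n for all l < T, then Y_T ≤ (γ + (2/e)·β)·D, where β = (1-γ)/2 and e is Euler's number. -/
/-!
The deviation `Y t - γ D` is multiplied by `1 - α t` at every step, so after `T` steps it equals
`(1 - γ) D ∏_{l < T} (1 - α l)`. Since `1 - x ≤ exp (-x)`, that product is at most
`exp (-∑_{l < T} α l) ≤ exp (-T / n) ≤ exp (-1)`.
-/

open Finset Real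

theorem sub_eq_prod_mul_of_affine_rec {R : Type*} [CommRing R] (a y : ℕ → R) (c : R)
    (hrec : ∀ t, y (t + 1) = (1 - a t) * y t + a t * c) (t : ℕ) :
    y t - c = (∏ l ∈ range t, (1 - a l)) * (y 0 - c) := by
  induction t with
  | zero => simp
  | succ t ih =>
    rw [prod_range_succ, hrec, mul_comm _ (1 - a t), mul_assoc, ← ih]
    ring

theorem prod_one_sub_le_exp_neg_sum {ι : Type*} (s : Finset ι) (a : ι → ℝ)
    (ha : ∀ i ∈ s, a i ≤ 1) :
    ∏ i ∈ s, (1 - a i) ≤ exp (-∑ i ∈ s, a i) := by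
  rw [← sum_neg_distrib, exp_sum]
  exact prod_le_prod (fun i hi => sub_nonneg.2 (ha i hi)) fun i _ => one_sub_le_exp_neg (a i)

theorem one_le_sum_range_of_le {a : ℕ → ℝ} {n T : ℕ} (hn : 1 ≤ n) (hT : n ≤ T)
    (ha : ∀ l < T, 1 / (n : ℝ) ≤ a l) :
    1 ≤ ∑ l ∈ range T, a l := by
  have hn' : (0 : ℝ) < n := by exact_mod_cast hn
  calc (1 : ℝ) = n * (1 / n) := by field_simp
    _ ≤ T * (1 / n) := by gcongr
    _ = ∑ _ ∈ range T, 1 / (n : ℝ) := by simp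
    _ ≤ ∑ l ∈ range T, a l := sum_le_sum fun l hl => ha l (mem_range.1 hl)

theorem Y_bound_polynomial_rate_general (D γ : ℝ) (α : ℕ → ℝ) (Y : ℕ → ℝ)
    (hD : 0 < D) (hγ1 : γ < 1)
    (hα : ∀ t, 0 ≤ α t ∧ α t ≤ 1)
    (hY0 : Y 0 = D)
    (hYrec : ∀ t, Y (t + 1) = (1 - α t) * Y t + α t * γ * D)
    (n T : ℕ) (hn : 1 ≤ n) (hT : n ≤ T)
    (hrate : ∀ l < T, α l ≥ 1 / (n : ℝ)) :
    Y T ≤ (γ + (2 / Real.exp 1) * ((1 - γ) / 2)) * D := by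
  have hdev : Y T - γ * D = (∏ l ∈ range T, (1 - α l)) * ((1 - γ) * D) := by
    rw [sub_eq_prod_mul_of_affine_rec α Y (γ * D) (fun t => by rw [hYrec, mul_assoc]) T, hY0]
    ring
  have hprod : ∏ l ∈ range T, (1 - α l) ≤ exp (-1) :=
    (prod_one_sub_le_exp_neg_sum _ α fun t _ => (hα t).2).trans
      (exp_le_exp.2 (neg_le_neg (one_le_sum_range_of_le hn hT hrate)))
  have hscale : 0 ≤ (1 - γ) * D := mul_nonneg (by linarith) hD.le
  calc Y T = γ * D + (∏ l ∈ range T, (1 - α l)) * ((1 - γ) * D) := by linarith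
    _ ≤ γ * D + exp (-1) * ((1 - γ) * D) := by gcongr
    _ = (γ + (2 / Real.exp 1) * ((1 - γ) / 2)) * D := by rw [exp_neg]; field_simp

/-- Polynomial learning rate lemma (deterministic core): if `n ≥ 1`,
`T ≥ n`, and `α_l ≥ 1/n` for all `l < T`, then
`Y_T ≤ (γ + (2/e)·β)·D` with `β = (1-γ)/2`. -/
theorem Y_bound_polynomial_rate (D γ : ℝ) (α : ℕ → ℝ) (Y : ℕ → ℝ)
    (hD : 0 < D) (hγ0 : 0 ≤ γ) (hγ1 : γ < 1)
    (hα : ∀ t, 0 ≤ α t ∧ α t ≤ 1)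
    (hY0 : Y 0 = D)
    (hYrec : ∀ t, Y (t + 1) = (1 - α t) * Y t + α t * γ * D)
    (n T : ℕ) (hn : 1 ≤ n) (hT : n ≤ T)
    (hrate : ∀ l < T, α l ≥ 1 / (n : ℝ)) :
    Y T ≤ (γ + (2 / Real.exp 1) * ((1 - γ) / 2)) * D :=
  Y_bound_polynomial_rate_general D γ α Y hD hγ1 hα hY0 hYrec n T hn hT hrate
end

section
/- Let ω ∈ (0,1) and L > 0 be real numbers, and let (a_k)_{k≥0} be a sequence of real numbers with a_0 > 0 satisfying the recurrence a_{k+1} = a_k + L·a_k^ω (real power). Then there exists a constant c > 0 (depending on ω, L, and a_0) such that a_k ≥ c·(k+1)^{1/(1-ω)} for every natural number k. -/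
/-!
Put `p = 1/(1-ω)`. The sequence `b k = c (k+1)^p` is a subsolution of the recurrence as soon as
`c` is small: convexity of `t ↦ t^p` gives `(x+1)^p ≤ x^p + (2^p - 1) x^(p-1)` for `x ≥ 1`, and
`p ω = p - 1` turns the increment `(2^p - 1) c x^(p-1)` into `K c^(1-ω) (c x^p)^ω` with
`K = 2^p - 1`, which is at most `L (c x^p)^ω` once `c ≤ (L/K)^p`. Since `t ↦ t + L t^ω` is
monotone on `[0, ∞)`, choosing also `c ≤ a 0` lets the subsolution stay below `a` by induction.
-/

open Real Set

theorem one_add_rpow_le {p t : ℝ} (hp : 1 ≤ p) (ht0 : 0 ≤ t) (ht1 : t ≤ 1) :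
    (1 + t) ^ p ≤ 1 + (2 ^ p - 1) * t := by
  have hchord := (convexOn_rpow hp).2 (mem_Ici.2 zero_le_one) (mem_Ici.2 zero_le_two)
    (sub_nonneg.2 ht1) ht0 (sub_add_cancel 1 t)
  simp only [smul_eq_mul, one_rpow] at hchord
  have hmid : (1 - t) * 1 + t * 2 = 1 + t := by ring
  rw [hmid] at hchord
  linarith

theorem add_one_rpow_le {p x : ℝ} (hp : 1 ≤ p) (hx : 1 ≤ x) :
    (x + 1) ^ p ≤ x ^ p + (2 ^ p - 1) * x ^ (p - 1) := by
  have hx0 : 0 < x := zero_lt_one.trans_le hx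
  calc (x + 1) ^ p = x ^ p * (1 + x⁻¹) ^ p := by
        rw [← mul_rpow hx0.le (by positivity), mul_add, mul_inv_cancel₀ hx0.ne', mul_one]
    _ ≤ x ^ p * (1 + (2 ^ p - 1) * x⁻¹) := by
        gcongr
        exact one_add_rpow_le hp (inv_nonneg.2 hx0.le) (inv_le_one_of_one_le₀ hx)
    _ = x ^ p + (2 ^ p - 1) * x ^ (p - 1) := by
        rw [rpow_sub_one hx0.ne']
        ring

theorem MonotoneOn.seq_le_seq {α : Type*} [Preorder α] {f : α → α} {s : Set α} {x y : ℕ → α}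
    (hf : MonotoneOn f s) (hs : IsUpperSet s) (hxs : ∀ k, x k ∈ s) (h₀ : x 0 ≤ y 0)
    (hx : ∀ k, x (k + 1) ≤ f (x k)) (hy : ∀ k, f (y k) ≤ y (k + 1)) (n : ℕ) : x n ≤ y n := by
  induction n with
  | zero => exact h₀
  | succ k ih =>
    calc x (k + 1) ≤ f (x k) := hx k
      _ ≤ f (y k) := hf (hxs k) (hs ih (hxs k)) ih
      _ ≤ y (k + 1) := hy k

theorem mul_add_one_rpow_le {p ω L c x : ℝ} (hp : 1 ≤ p) (hpω : p * ω = p - 1) (hc : 0 ≤ c)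
    (hcL : c * (2 ^ p - 1) ≤ L * c ^ ω) (hx : 1 ≤ x) :
    c * (x + 1) ^ p ≤ c * x ^ p + L * (c * x ^ p) ^ ω := by
  have hx0 : 0 ≤ x := zero_le_one.trans hx
  have hpow : (c * x ^ p) ^ ω = c ^ ω * x ^ (p - 1) := by
    rw [mul_rpow hc (rpow_nonneg hx0 p), ← rpow_mul hx0, hpω]
  calc c * (x + 1) ^ p ≤ c * (x ^ p + (2 ^ p - 1) * x ^ (p - 1)) := by
        gcongr
        exact add_one_rpow_le hp hx
    _ = c * x ^ p + c * (2 ^ p - 1) * x ^ (p - 1) := by ring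
    _ ≤ c * x ^ p + L * c ^ ω * x ^ (p - 1) := by
        gcongr
    _ = c * x ^ p + L * (c * x ^ p) ^ ω := by rw [hpow]; ring

theorem mul_le_mul_rpow_of_le {ω K L c : ℝ} (hω1 : ω < 1) (hK : 0 < K) (hL : 0 ≤ L) (hc0 : 0 < c)
    (hc : c ≤ (L / K) ^ (1 / (1 - ω))) : c * K ≤ L * c ^ ω := by
  have hω1' : 0 < 1 - ω := sub_pos.2 hω1
  have hcK : c ^ (1 - ω) ≤ L / K := by
    rw [one_div] at hc
    exact (le_rpow_inv_iff_of_pos hc0.le (by positivity) hω1').1 hc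
  calc c * K = c ^ (1 - ω) * c ^ ω * K := by rw [← rpow_add hc0, sub_add_cancel, rpow_one]
    _ ≤ L / K * c ^ ω * K := by gcongr
    _ = L * c ^ ω := by field_simp

/-- The recurrence `a_{k+1} = a_k + L·a_k^ω` with `ω ∈ (0,1)`, `L > 0`,
`a_0 > 0` grows at least like a constant multiple of `(k+1)^{1/(1-ω)}`. -/
theorem recurrence_lower_bound (ω L : ℝ) (a : ℕ → ℝ)
    (hω0 : 0 < ω) (hω1 : ω < 1) (hL : 0 < L)
    (ha0 : 0 < a 0)
    (harec : ∀ k, a (k + 1) = a k + L * a k ^ ω) :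
    ∃ c > 0, ∀ k : ℕ, a k ≥ c * ((k : ℝ) + 1) ^ (1 / (1 - ω)) := by
  set p := 1 / (1 - ω) with hp_def
  have hω1' : 0 < 1 - ω := sub_pos.2 hω1
  have hp : 1 ≤ p := by rw [hp_def, le_div_iff₀ hω1']; linarith
  have hpω : p * ω = p - 1 := by rw [hp_def]; field_simp; ring
  have hK : 0 < (2 : ℝ) ^ p - 1 := by
    have := one_lt_rpow (one_lt_two : (1 : ℝ) < 2) (zero_lt_one.trans_le hp)
    linarith
  set c := min (a 0) ((L / (2 ^ p - 1)) ^ p)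
  have hc0 : 0 < c := lt_min ha0 (rpow_pos_of_pos (div_pos hL hK) p)
  have hcL : c * (2 ^ p - 1) ≤ L * c ^ ω :=
    mul_le_mul_rpow_of_le hω1 hK hL.le hc0 (min_le_right _ _)
  have hmono : MonotoneOn (fun t ↦ t + L * t ^ ω) (Ici 0) :=
    monotoneOn_id.add fun s hs t _ hst ↦
      mul_le_mul_of_nonneg_left (rpow_le_rpow hs hst hω0.le) hL.le
  have hstep : ∀ k : ℕ, c * (((k + 1 : ℕ) : ℝ) + 1) ^ p ≤
      c * ((k : ℝ) + 1) ^ p + L * (c * ((k : ℝ) + 1) ^ p) ^ ω := fun k ↦ by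
    rw [Nat.cast_succ]
    exact mul_add_one_rpow_le hp hpω hc0.le hcL (le_add_of_nonneg_left k.cast_nonneg)
  have hb0 : c * (((0 : ℕ) : ℝ) + 1) ^ p ≤ a 0 := by
    simpa only [Nat.cast_zero, zero_add, one_rpow, mul_one] using min_le_left (a 0) _
  exact ⟨c, hc0, hmono.seq_le_seq (isUpperSet_Ici 0) (fun k ↦ mem_Ici.2 (by positivity)) hb0 hstep
    fun k ↦ (harec k).ge⟩
end
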